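/- Let F be a probability measure on S² × S², let α_b be a real number, and suppose the Leggett model with unbiased Bob marginal holds: for each λ = (u, v) there are functions Ā_λ(a), B̄_λ(b) = α_b·(v·b), and C_λ(a, b) ∈ [−1, 1] with |Ā_λ(a) ± B̄_λ(b)| ≤ 1 ± C_λ(a, b) for all unit a, b; define E(a, b) := ∫ C_λ(a, b) dF(λ). Let φ ∈ [0, π] and for i = 1, 2, 3 let a_i, b_i, b_i' be unit vectors such that b_i·b_i' = cos φ for each i and the three sum vectors b_1 + b_1', b_2 + b_2', b_3 + b_3' are mutually orthogonal. Then (1/3)·Σ_{i=1}^{3} |E(a_i, b_i) − E(a_i, b_i')| ≤ 2 − (2|α_b|/3)·|cos(φ/2)|. -/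

import Mathlib

open scoped RealInnerProductSpace
open MeasureTheory

noncomputable section

/-- The unit sphere S² ⊆ ℝ³. -/
abbrev Sph := Metric.sphere (0 : EuclideanSpace ℝ (Fin 3)) 1

/-!
Adding the two Leggett constraints for `(a, b)` and `(a, b')` and using the triangle inequality
gives, for each hidden state `λ = (u, v)`, the pointwise bound
`|C_λ(a, b) - C_λ(a, b')| ≤ 2 - |α_b| |⟪v, b + b'⟫|`. The three vectors `b_i + b_i'` are
orthogonal of common length `2 |cos (φ / 2)|`, hence a rescaled orthonormal basis of ℝ³, so for
the unit vector `v` Parseval gives `∑ ⟪v, b_i + b_i'⟫² = 4 cos² (φ / 2)` and therefore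
`∑ |⟪v, b_i + b_i'⟫| ≥ 2 |cos (φ / 2)|`. The resulting bound on `∑ᵢ |C_λ(a_i, b_i) - C_λ(a_i, b_i')|`
does not depend on `λ`, so it survives integration against `F`.
-/

open Finset

theorem abs_sub_le_two_sub_abs_add_of_leggett {A B B' C C' : ℝ}
    (hp : |A + B| ≤ 1 + C) (hm : |A - B| ≤ 1 - C)
    (hp' : |A + B'| ≤ 1 + C') (hm' : |A - B'| ≤ 1 - C') :
    |C - C'| ≤ 2 - |B + B'| := by
  have h₁ : |B + B'| ≤ |A - B| + |A + B'| := by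
    simpa [add_comm] using abs_sub (A + B') (A - B)
  have h₂ : |B + B'| ≤ |A + B| + |A - B'| := by
    simpa [add_comm] using abs_sub (A + B) (A - B')
  rw [abs_sub_le_iff]
  constructor <;> linarith

theorem abs_le_one_of_leggett {A B C : ℝ} (hp : |A + B| ≤ 1 + C) (hm : |A - B| ≤ 1 - C) :
    |C| ≤ 1 :=
  abs_le.mpr ⟨by linarith [abs_nonneg (A + B)], by linarith [abs_nonneg (A - B)]⟩

theorem norm_add_eq_two_mul_abs_cos_half {E : Type*} [NormedAddCommGroup E]
    [InnerProductSpace ℝ E] {x y : E} {φ : ℝ} (hx : ‖x‖ = 1) (hy : ‖y‖ = 1)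
    (hxy : ⟪x, y⟫ = Real.cos φ) :
    ‖x + y‖ = 2 * |Real.cos (φ / 2)| := by
  have hsq : ‖x + y‖ ^ 2 = (2 * |Real.cos (φ / 2)|) ^ 2 := by
    rw [norm_add_sq_real, hx, hy, hxy, mul_pow, sq_abs, Real.cos_sq, mul_div_cancel₀ φ two_ne_zero]
    ring
  exact (pow_left_inj₀ (norm_nonneg _) (by positivity) two_ne_zero).mp hsq

theorem OrthonormalBasis.norm_le_sum_abs_inner {ι E : Type*} [Fintype ι]
    [NormedAddCommGroup E] [InnerProductSpace ℝ E] (e : OrthonormalBasis ι ℝ E) (v : E) :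
    ‖v‖ ≤ ∑ i, |⟪v, e i⟫| := by
  have hsq : ‖v‖ ^ 2 ≤ (∑ i, |⟪v, e i⟫|) ^ 2 := by
    rw [← e.sum_sq_inner_left]
    simpa only [sq_abs] using sum_sq_le_sq_sum_of_nonneg fun i _ => abs_nonneg ⟪v, e i⟫
  exact abs_le_of_sq_le_sq' hsq (sum_nonneg fun i _ => abs_nonneg _) |>.2

theorem mul_norm_le_sum_abs_inner_of_orthogonal {ι E : Type*} [Fintype ι]
    [NormedAddCommGroup E] [InnerProductSpace ℝ E] [FiniteDimensional ℝ E]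
    {w : ι → E} {r : ℝ} (horth : Pairwise fun i j => ⟪w i, w j⟫ = 0) (hnorm : ∀ i, ‖w i‖ = r)
    (hcard : Fintype.card ι = Module.finrank ℝ E) (v : E) :
    r * ‖v‖ ≤ ∑ i, |⟪v, w i⟫| := by
  rcases le_or_gt r 0 with hr | hr
  · exact (mul_nonpos_of_nonpos_of_nonneg hr (norm_nonneg v)).trans
      (sum_nonneg fun i _ => abs_nonneg _)
  set e : ι → E := fun i => r⁻¹ • w i
  have he : Orthonormal ℝ e := by
    refine ⟨fun i => ?_, fun i j hij => ?_⟩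
    · simp [e, norm_smul, hnorm i, abs_of_pos hr, hr.ne']
    · simp [e, real_inner_smul_left, real_inner_smul_right, horth hij]
  let b := OrthonormalBasis.mk he
    (he.linearIndependent.span_eq_top_of_card_eq_finrank' hcard).ge
  calc r * ‖v‖ ≤ r * ∑ i, |⟪v, e i⟫| := by
        gcongr
        simpa [b] using b.norm_le_sum_abs_inner v
    _ = ∑ i, |⟪v, w i⟫| := by
        rw [mul_sum]
        refine sum_congr rfl fun i _ => ?_
        simp [e, real_inner_smul_right, abs_mul, abs_of_pos hr, hr.ne']

theorem sum_abs_integral_sub_le {α ι : Type*} [MeasurableSpace α] [Fintype ι]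
    {μ : Measure α} [IsProbabilityMeasure μ] {f g : ι → α → ℝ}
    (hf : ∀ i, Integrable (f i) μ) (hg : ∀ i, Integrable (g i) μ) {K : ℝ}
    (hK : ∀ x, ∑ i, |f i x - g i x| ≤ K) :
    ∑ i, |∫ x, f i x ∂μ - ∫ x, g i x ∂μ| ≤ K := by
  have hint : ∀ i, Integrable (fun x => |f i x - g i x|) μ := fun i => ((hf i).sub (hg i)).abs
  calc ∑ i, |∫ x, f i x ∂μ - ∫ x, g i x ∂μ|
      = ∑ i, |∫ x, (f i x - g i x) ∂μ| := by simp only [integral_sub (hf _) (hg _)]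
    _ ≤ ∑ i, ∫ x, |f i x - g i x| ∂μ := sum_le_sum fun i _ => abs_integral_le_integral_abs
    _ = ∫ x, ∑ i, |f i x - g i x| ∂μ := (integral_finsetSum _ fun i _ => hint i).symm
    _ ≤ ∫ _, K ∂μ := integral_mono (integrable_finsetSum _ fun i _ => hint i) (integrable_const K) hK
    _ = K := by simp

theorem stmt_16_general (F : Measure (Sph × Sph)) [IsProbabilityMeasure F] (αb : ℝ)
    (A B : Sph × Sph → EuclideanSpace ℝ (Fin 3) → ℝ)
    (C : Sph × Sph → EuclideanSpace ℝ (Fin 3) → EuclideanSpace ℝ (Fin 3) → ℝ)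
    (hMalus : ∀ (l : Sph × Sph) (b : EuclideanSpace ℝ (Fin 3)), ‖b‖ = 1 →
      B l b = αb * ⟪(l.2 : EuclideanSpace ℝ (Fin 3)), b⟫)
    (hplus : ∀ l a b, ‖a‖ = 1 → ‖b‖ = 1 → |A l a + B l b| ≤ 1 + C l a b)
    (hminus : ∀ l a b, ‖a‖ = 1 → ‖b‖ = 1 → |A l a - B l b| ≤ 1 - C l a b)
    (hmC : ∀ a b, Measurable (fun l => C l a b))
    (φ : ℝ)
    (a b b' : Fin 3 → EuclideanSpace ℝ (Fin 3))
    (ha : ∀ i, ‖a i‖ = 1) (hb : ∀ i, ‖b i‖ = 1) (hb' : ∀ i, ‖b' i‖ = 1)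
    (hangle : ∀ i, ⟪b i, b' i⟫ = Real.cos φ)
    (horth : ∀ i j, i ≠ j → ⟪b i + b' i, b j + b' j⟫ = 0) :
    (1/3 : ℝ) * ∑ i : Fin 3, |(∫ l, C l (a i) (b i) ∂F) - (∫ l, C l (a i) (b' i) ∂F)|
      ≤ 2 - (2 * |αb| / 3) * |Real.cos (φ / 2)| := by
  have hint : ∀ x y, ‖x‖ = 1 → ‖y‖ = 1 → Integrable (fun l => C l x y) F := fun x y hx hy =>
    .of_bound (hmC x y).aestronglyMeasurable 1 (.of_forall fun l =>
      abs_le_one_of_leggett (hplus l x y hx hy) (hminus l x y hx hy))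
  have hpoint : ∀ (l : Sph × Sph) i, |C l (a i) (b i) - C l (a i) (b' i)| ≤
      2 - |αb| * |⟪(l.2 : EuclideanSpace ℝ (Fin 3)), b i + b' i⟫| := fun l i => by
    have := abs_sub_le_two_sub_abs_add_of_leggett (hplus l _ _ (ha i) (hb i))
      (hminus l _ _ (ha i) (hb i)) (hplus l _ _ (ha i) (hb' i)) (hminus l _ _ (ha i) (hb' i))
    rwa [hMalus l _ (hb i), hMalus l _ (hb' i), ← mul_add, ← inner_add_right, abs_mul] at this
  have hsphere : ∀ v : Sph, 2 * |Real.cos (φ / 2)| ≤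
      ∑ i, |⟪(v : EuclideanSpace ℝ (Fin 3)), b i + b' i⟫| := fun v => by
    simpa using mul_norm_le_sum_abs_inner_of_orthogonal (fun i j hij => horth i j hij)
      (fun i => norm_add_eq_two_mul_abs_cos_half (hb i) (hb' i) (hangle i)) (by simp)
      (v : EuclideanSpace ℝ (Fin 3))
  have hbound : ∀ l : Sph × Sph, ∑ i, |C l (a i) (b i) - C l (a i) (b' i)| ≤
      6 - 2 * |αb| * |Real.cos (φ / 2)| := fun l =>
    calc ∑ i, |C l (a i) (b i) - C l (a i) (b' i)|
        ≤ ∑ i, (2 - |αb| * |⟪(l.2 : EuclideanSpace ℝ (Fin 3)), b i + b' i⟫|) :=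
          sum_le_sum fun i _ => hpoint l i
      _ = 6 - |αb| * ∑ i, |⟪(l.2 : EuclideanSpace ℝ (Fin 3)), b i + b' i⟫| := by
          rw [sum_sub_distrib, ← mul_sum]; norm_num
      _ ≤ 6 - 2 * |αb| * |Real.cos (φ / 2)| := by
          linarith [mul_le_mul_of_nonneg_left (hsphere l.2) (abs_nonneg αb)]
  have := sum_abs_integral_sub_le (fun i => hint _ _ (ha i) (hb i))
    (fun i => hint _ _ (ha i) (hb' i)) hbound
  linarith

theorem stmt_16 (F : Measure (Sph × Sph)) [IsProbabilityMeasure F] (αb : ℝ)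
    (A B : Sph × Sph → EuclideanSpace ℝ (Fin 3) → ℝ)
    (C : Sph × Sph → EuclideanSpace ℝ (Fin 3) → EuclideanSpace ℝ (Fin 3) → ℝ)
    (hCbound : ∀ l a b, ‖a‖ = 1 → ‖b‖ = 1 → |C l a b| ≤ 1)
    (hMalus : ∀ (l : Sph × Sph) (b : EuclideanSpace ℝ (Fin 3)), ‖b‖ = 1 →
      B l b = αb * ⟪(l.2 : EuclideanSpace ℝ (Fin 3)), b⟫)
    (hplus : ∀ l a b, ‖a‖ = 1 → ‖b‖ = 1 → |A l a + B l b| ≤ 1 + C l a b)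
    (hminus : ∀ l a b, ‖a‖ = 1 → ‖b‖ = 1 → |A l a - B l b| ≤ 1 - C l a b)
    (hmA : ∀ a, Measurable (fun l => A l a))
    (hmB : ∀ b, Measurable (fun l => B l b))
    (hmC : ∀ a b, Measurable (fun l => C l a b))
    (φ : ℝ) (hφ : φ ∈ Set.Icc 0 Real.pi)
    (a b b' : Fin 3 → EuclideanSpace ℝ (Fin 3))
    (ha : ∀ i, ‖a i‖ = 1) (hb : ∀ i, ‖b i‖ = 1) (hb' : ∀ i, ‖b' i‖ = 1)
    (hangle : ∀ i, ⟪b i, b' i⟫ = Real.cos φ)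
    (horth : ∀ i j, i ≠ j → ⟪b i + b' i, b j + b' j⟫ = 0) :
    (1/3 : ℝ) * ∑ i : Fin 3, |(∫ l, C l (a i) (b i) ∂F) - (∫ l, C l (a i) (b' i) ∂F)|
      ≤ 2 - (2 * |αb| / 3) * |Real.cos (φ / 2)| :=
  stmt_16_general F αb A B C hMalus hplus hminus hmC φ a b b' ha hb hb' hangle horth

end
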